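/- Let L ≥ 1, let n : Fin L → ℕ with n l ≥ 2 for all l, and let G = Π_{l ∈ Fin L} ZMod (n l). For l ∈ Fin L, let e^l ∈ G be the element with l-th coordinate 1 and all other coordinates 0, and let K^l := {k ∈ G : k_j = 0 for all j ≥ l} (elements supported on the first l coordinates), so K^0 = {0}. Let S be the set of index pairs consisting of: (0,0); (0, e^l) for each l; (e^l, s·e^l) for each l and 1 ≤ s ≤ n l − 2; and (t·e^l, k) for each l, 1 ≤ t ≤ n l − 1, and k ∈ K^l with k ≠ 0 and k_l = 0 (i.e., k ∈ K^{l'} for l' the index of l, k supported on coordinates strictly before l). Let Θ, Θ̃ : G → ℝ be real signals with F(Θ)_κ ≠ 0 for every κ ∈ G. If β(Θ̃)_{κ,κ'} = β(Θ)_{κ,κ'} for every (κ,κ') ∈ S, then there exists h ∈ G such that Θ̃(g) = Θ(g + h) for all g ∈ G. (Selective-bispectrum inversion on an arbitrary finite product of cyclic groups, hence on any finite commutative group, using only |G| bispectral coefficients.) -/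

import Mathlib

/-!
Translating a signal by `h` multiplies `F(Θ)_κ` by `χ_κ(h)`, so it suffices to find one `h` with
`F(Θ')_κ = χ_κ(h) F(Θ)_κ` for all `κ`. If `F(Θ')` is a unimodular multiple `a` of `F(Θ)` at `κ`
and `b` at `κ'`, equality of `β_{κ,κ'}` forces the multiple `a b` at `κ + κ'`. For real signals
`F_0` is real, so `β_{0,0} = F_0³` fixes it, and then `β_{0,e^l}` makes
`ψ_l = F(Θ')_{e^l} / F(Θ)_{e^l}` unimodular. The coefficients `β_{e^l, s e^l}` give the multiple
`ψ_l^t` at `t e^l`; as `(n_l - 1) e^l = -e^l` and `F_{-κ} = conj F_κ`, this forces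
`ψ_l^{n_l} = 1`, so `ψ_l = χ_{e^l}(h)` for some `h`. The coefficients `β_{t e^l, k}`, with `k`
supported before `l`, propagate the multiple `χ_κ(h)` to all of `G` one coordinate at a time,
and Fourier inversion gives `Θ' = Θ(· + h)`.
-/

open Finset

/-- The character of `G = Π_{l : Fin L} ZMod (n l)` indexed by `κ`:
`χ_κ(g) = Π_l exp(2πi·κ̄_l·ḡ_l/(n l))`. -/
noncomputable def piChar {L : ℕ} (n : Fin L → ℕ) [∀ l, NeZero (n l)]
    (κ u : ∀ l, ZMod (n l)) : ℂ :=
  ∏ l : Fin L,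
    Complex.exp (2 * (Real.pi : ℂ) * Complex.I * (((κ l).val * (u l).val : ℕ)) / (n l : ℂ))

/-- The Fourier transform on `G = Π_{l : Fin L} ZMod (n l)`:
`F(Θ)_κ = Σ_{u} Θ(u) · conj(χ_κ(u))`. -/
noncomputable def piDFT {L : ℕ} (n : Fin L → ℕ) [∀ l, NeZero (n l)]
    (Θ : (∀ l, ZMod (n l)) → ℂ) (κ : ∀ l, ZMod (n l)) : ℂ :=
  ∑ u : ∀ l, ZMod (n l), Θ u * (starRingEnd ℂ) (piChar n κ u)

/-- The bispectrum on `G = Π_{l : Fin L} ZMod (n l)`: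
`β(Θ)_{κ,κ'} = F(Θ)_κ · F(Θ)_{κ'} · conj(F(Θ)_{κ+κ'})`. -/
noncomputable def piBispectrum {L : ℕ} (n : Fin L → ℕ) [∀ l, NeZero (n l)]
    (Θ : (∀ l, ZMod (n l)) → ℂ) (κ κ' : ∀ l, ZMod (n l)) : ℂ :=
  piDFT n Θ κ * piDFT n Θ κ' * (starRingEnd ℂ) (piDFT n Θ (κ + κ'))

open Complex ComplexConjugate ZMod

section Characters

variable {L : ℕ} {n : Fin L → ℕ} [∀ l, NeZero (n l)]

lemma piChar_eq_prod_stdAddChar (κ u : ∀ l, ZMod (n l)) :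
    piChar n κ u = ∏ l, stdAddChar (κ l * u l) := by
  refine Finset.prod_congr rfl fun l _ => ?_
  have : κ l * u l = (((κ l).val * (u l).val : ℕ) : ZMod (n l)) := by
    rw [Nat.cast_mul, natCast_zmod_val, natCast_zmod_val]
  rw [this, stdAddChar_apply, toCircle_natCast]

lemma piChar_comm (κ u : ∀ l, ZMod (n l)) : piChar n κ u = piChar n u κ := by
  simp only [piChar_eq_prod_stdAddChar, mul_comm]

lemma piChar_add_left (κ κ' u : ∀ l, ZMod (n l)) :
    piChar n (κ + κ') u = piChar n κ u * piChar n κ' u := by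
  simp only [piChar_eq_prod_stdAddChar, Pi.add_apply, add_mul, AddChar.map_add_eq_mul,
    Finset.prod_mul_distrib]

lemma piChar_add_right (κ u u' : ∀ l, ZMod (n l)) :
    piChar n κ (u + u') = piChar n κ u * piChar n κ u' := by
  simp only [piChar_comm κ, piChar_add_left]

lemma piChar_zero_left (u : ∀ l, ZMod (n l)) : piChar n 0 u = 1 := by
  simp [piChar_eq_prod_stdAddChar]

lemma piChar_neg_left (κ u : ∀ l, ZMod (n l)) : piChar n (-κ) u = conj (piChar n κ u) := by
  simp only [piChar_eq_prod_stdAddChar, map_prod, Pi.neg_apply, neg_mul, AddChar.map_neg_eq_conj]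

lemma piChar_neg_right (κ u : ∀ l, ZMod (n l)) : piChar n κ (-u) = conj (piChar n κ u) := by
  rw [piChar_comm, piChar_neg_left, piChar_comm]

lemma norm_piChar (κ u : ∀ l, ZMod (n l)) : ‖piChar n κ u‖ = 1 := by
  simp [piChar_eq_prod_stdAddChar, stdAddChar_apply, Circle.norm_coe]

lemma piChar_single_left (l : Fin L) (c : ZMod (n l)) (u : ∀ l, ZMod (n l)) :
    piChar n (Pi.single l c) u = stdAddChar (c * u l) := by
  rw [piChar_eq_prod_stdAddChar, Finset.prod_eq_single l]
  · rw [Pi.single_eq_same]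
  · intro j _ hj
    rw [Pi.single_eq_of_ne hj, zero_mul, AddChar.map_zero_eq_one]
  · simp

lemma sum_piChar_left (u : ∀ l, ZMod (n l)) :
    ∑ κ, piChar n κ u = if u = 0 then (Fintype.card (∀ l, ZMod (n l)) : ℂ) else 0 := by
  classical
  simp only [piChar_eq_prod_stdAddChar]
  rw [← Fintype.prod_sum (fun l c => stdAddChar (c * u l))]
  simp only [AddChar.sum_mulShift _ (isPrimitive_stdAddChar _)]
  split_ifs with hu
  · simp [hu, Fintype.card_pi]
  · obtain ⟨l, hl : u l ≠ 0⟩ := Function.ne_iff.1 hu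
    exact Finset.prod_eq_zero (Finset.mem_univ l) (by rw [if_neg hl, Nat.cast_zero])

end Characters

section FourierTransform

variable {L : ℕ} {n : Fin L → ℕ} [∀ l, NeZero (n l)]

lemma sum_piDFT_mul_piChar (f : (∀ l, ZMod (n l)) → ℂ) (u : ∀ l, ZMod (n l)) :
    ∑ κ, piDFT n f κ * piChar n κ u = Fintype.card (∀ l, ZMod (n l)) * f u := by
  calc ∑ κ, piDFT n f κ * piChar n κ u
      = ∑ κ, ∑ v, f v * piChar n κ (u - v) := by
        refine Finset.sum_congr rfl fun κ _ => ?_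
        rw [piDFT, Finset.sum_mul]
        refine Finset.sum_congr rfl fun v _ => ?_
        rw [sub_eq_neg_add, piChar_add_right, piChar_neg_right, mul_assoc]
    _ = ∑ v, f v * ∑ κ, piChar n κ (u - v) := by
        rw [Finset.sum_comm]
        simp only [Finset.mul_sum]
    _ = Fintype.card (∀ l, ZMod (n l)) * f u := by
        simp [sum_piChar_left, sub_eq_zero, mul_comm]

lemma piDFT_injective : Function.Injective (piDFT n) := by
  intro f g hfg
  funext u
  refine mul_left_cancel₀ (Nat.cast_ne_zero.2 Fintype.card_ne_zero :
    (Fintype.card (∀ l, ZMod (n l)) : ℂ) ≠ 0) ?_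
  rw [← sum_piDFT_mul_piChar, ← sum_piDFT_mul_piChar, hfg]

lemma piDFT_comp_add_right (f : (∀ l, ZMod (n l)) → ℂ) (h κ : ∀ l, ZMod (n l)) :
    piDFT n (fun g => f (g + h)) κ = piChar n κ h * piDFT n f κ := by
  rw [piDFT, piDFT, Finset.mul_sum]
  refine Fintype.sum_equiv (Equiv.addRight h) _ _ fun u => ?_
  have hh : piChar n κ h * conj (piChar n κ h) = 1 := by
    rw [mul_conj', norm_piChar, ofReal_one, one_pow]
  rw [Equiv.coe_addRight, piChar_add_right, map_mul]
  linear_combination -(f (u + h) * conj (piChar n κ u)) * hh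

lemma piDFT_ofReal_zero (Θ : (∀ l, ZMod (n l)) → ℝ) :
    piDFT n (fun g => (Θ g : ℂ)) 0 = ((∑ u, Θ u : ℝ) : ℂ) := by
  simp [piDFT, piChar_zero_left]

lemma piDFT_ofReal_neg (Θ : (∀ l, ZMod (n l)) → ℝ) (κ : ∀ l, ZMod (n l)) :
    piDFT n (fun g => (Θ g : ℂ)) (-κ) = conj (piDFT n (fun g => (Θ g : ℂ)) κ) := by
  simp [piDFT, piChar_neg_left]

end FourierTransform

lemma eq_mul_of_mul_conj_eq_conj {c z z' : ℂ} (hc : ‖c‖ = 1) (h : c * conj z' = conj z) :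
    z' = c * z := by
  have hcc : c * conj c = 1 := by rw [mul_conj', hc, ofReal_one, one_pow]
  have hconj : conj c * z' = z := by simpa using congrArg conj h
  linear_combination (-z') * hcc + c * hconj

lemma ZMod.exists_stdAddChar_eq_of_pow_eq_one {N : ℕ} [NeZero N] {z : ℂ} (hz : z ^ N = 1) :
    ∃ x : ZMod N, stdAddChar x = z := by
  have hprim : IsPrimitiveRoot (stdAddChar (1 : ZMod N)) N := by
    convert Complex.isPrimitiveRoot_exp N (NeZero.ne N) using 1
    simpa using stdAddChar_coe (N := N) 1
  obtain ⟨i, -, hi⟩ := hprim.eq_pow_of_pow_eq_one hz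
  exact ⟨i, by rw [← hi, ← AddChar.map_nsmul_eq_pow, nsmul_one]⟩

lemma Pi.induction_on_max {ι : Type*} [Fintype ι] [LinearOrder ι] {β : ι → Type*}
    [∀ i, AddZeroClass (β i)] {P : (∀ i, β i) → Prop} (zero : P 0)
    (single_add : ∀ i (c : β i) (x : ∀ i, β i), (∀ j, i ≤ j → x j = 0) → P x →
      P (Pi.single i c + x))
    (x : ∀ i, β i) : P x := by
  suffices ∀ s : Finset ι, ∀ x : ∀ i, β i, (∀ j ∉ s, x j = 0) → P x from
    this Finset.univ x (by simp)
  intro s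
  induction s using Finset.induction_on_max with
  | empty =>
    intro x hx
    convert zero
    exact funext fun j => hx j (Finset.notMem_empty j)
  | insert i s hlt ih =>
    intro x hx
    have hsplit : x = Pi.single i (x i) + Function.update x i 0 := by
      funext j
      rcases eq_or_ne j i with rfl | hji <;> simp [*]
    rw [hsplit]
    refine single_add i (x i) _ (fun j hij => ?_) (ih _ fun j hj => ?_)
    · rcases hij.eq_or_lt with rfl | hij
      · exact Function.update_self ..
      · rw [Function.update_of_ne hij.ne']
        exact hx j fun hj =>
          (Finset.mem_insert.1 hj).elim hij.ne' fun hjs => (hlt j hjs).asymm hij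
    · rcases eq_or_ne j i with rfl | hji
      · exact Function.update_self ..
      · rw [Function.update_of_ne hji]
        exact hx j fun hj' => (Finset.mem_insert.1 hj').elim hji hj

lemma Pi.nsmul_single_one {ι : Type*} [DecidableEq ι] {β : ι → Type*}
    [∀ i, AddMonoidWithOne (β i)] (i : ι) (t : ℕ) :
    t • (Pi.single i 1 : ∀ j, β j) = Pi.single i (t : β i) := by
  rw [← nsmul_one, ← Pi.single_nsmul]

section Bispectrum

variable {L : ℕ} {n : Fin L → ℕ} [∀ l, NeZero (n l)]

lemma piDFT_add_eq_mul_of_piBispectrum_eq {f f' : (∀ l, ZMod (n l)) → ℂ}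
    {κ κ' : ∀ l, ZMod (n l)} {a b : ℂ} (hab : ‖a * b‖ = 1)
    (hf : piDFT n f κ * piDFT n f κ' ≠ 0)
    (hκ : piDFT n f' κ = a * piDFT n f κ) (hκ' : piDFT n f' κ' = b * piDFT n f κ')
    (hβ : piBispectrum n f' κ κ' = piBispectrum n f κ κ') :
    piDFT n f' (κ + κ') = a * b * piDFT n f (κ + κ') := by
  refine eq_mul_of_mul_conj_eq_conj hab (mul_left_cancel₀ hf ?_)
  rw [piBispectrum, piBispectrum, hκ, hκ'] at hβ
  linear_combination hβ

lemma norm_piDFT_eq_of_piBispectrum_zero_left_eq {f f' : (∀ l, ZMod (n l)) → ℂ}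
    {κ : ∀ l, ZMod (n l)} (h0 : piDFT n f' 0 = piDFT n f 0) (hf0 : piDFT n f 0 ≠ 0)
    (hβ : piBispectrum n f' 0 κ = piBispectrum n f 0 κ) :
    ‖piDFT n f' κ‖ = ‖piDFT n f κ‖ := by
  rw [piBispectrum, piBispectrum, zero_add, h0, mul_assoc, mul_assoc, mul_conj', mul_conj']
    at hβ
  have hsq : ‖piDFT n f' κ‖ ^ 2 = ‖piDFT n f κ‖ ^ 2 := by
    exact_mod_cast mul_left_cancel₀ hf0 hβ
  exact (pow_left_inj₀ (norm_nonneg _) (norm_nonneg _) two_ne_zero).1 hsq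

lemma piDFT_nsmul_eq_of_piBispectrum_eq {f f' : (∀ l, ZMod (n l)) → ℂ}
    (hf : ∀ κ, piDFT n f κ ≠ 0) {κ : ∀ l, ZMod (n l)} {ψ : ℂ} (hψ : ‖ψ‖ = 1)
    (hκ : piDFT n f' κ = ψ * piDFT n f κ) {m : ℕ}
    (hβ : ∀ s, 1 ≤ s → s ≤ m → piBispectrum n f' κ (s • κ) = piBispectrum n f κ (s • κ))
    {t : ℕ} (ht : 1 ≤ t) (htm : t ≤ m + 1) :
    piDFT n f' (t • κ) = ψ ^ t * piDFT n f (t • κ) := by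
  induction t, ht using Nat.le_induction with
  | base => rw [one_nsmul, pow_one, hκ]
  | succ t ht ih =>
    rw [succ_nsmul', pow_succ']
    exact piDFT_add_eq_mul_of_piBispectrum_eq
      (by rw [norm_mul, norm_pow, hψ, one_pow, one_mul]) (mul_ne_zero (hf _) (hf _)) hκ
      (ih (by omega)) (hβ t ht (by omega))

lemma piDFT_ofReal_zero_eq_of_piBispectrum_zero_eq {Θ Θ' : (∀ l, ZMod (n l)) → ℝ}
    (hβ : piBispectrum n (fun g => (Θ' g : ℂ)) 0 0
      = piBispectrum n (fun g => (Θ g : ℂ)) 0 0) :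
    piDFT n (fun g => (Θ' g : ℂ)) 0 = piDFT n (fun g => (Θ g : ℂ)) 0 := by
  rw [piBispectrum, piBispectrum, zero_add, piDFT_ofReal_zero, piDFT_ofReal_zero, conj_ofReal,
    conj_ofReal] at hβ
  rw [piDFT_ofReal_zero, piDFT_ofReal_zero]
  have hcube : (∑ u, Θ' u) ^ 3 = (∑ u, Θ u) ^ 3 := by
    exact_mod_cast (by linear_combination hβ :
      ((∑ u, Θ' u : ℝ) : ℂ) ^ 3 = ((∑ u, Θ u : ℝ) : ℂ) ^ 3)
  exact congrArg _ ((Odd.pow_inj (by decide)).1 hcube)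

lemma pow_eq_one_of_piDFT_ofReal_nsmul_eq {Θ Θ' : (∀ l, ZMod (n l)) → ℝ} {κ : ∀ l, ZMod (n l)}
    (hκ0 : piDFT n (fun g => (Θ g : ℂ)) κ ≠ 0) {ψ : ℂ} (hψ : ‖ψ‖ = 1)
    (hκ : piDFT n (fun g => (Θ' g : ℂ)) κ = ψ * piDFT n (fun g => (Θ g : ℂ)) κ) {m : ℕ}
    (hneg : m • κ = -κ)
    (hm : piDFT n (fun g => (Θ' g : ℂ)) (m • κ)
      = ψ ^ m * piDFT n (fun g => (Θ g : ℂ)) (m • κ)) :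
    ψ ^ (m + 1) = 1 := by
  rw [hneg, piDFT_ofReal_neg, piDFT_ofReal_neg, hκ, map_mul] at hm
  have hconj : conj ψ = ψ ^ m := mul_right_cancel₀ ((map_ne_zero conj).2 hκ0) hm
  rw [pow_succ, ← hconj, conj_mul', hψ, ofReal_one, one_pow]

lemma exists_piDFT_single_eq_stdAddChar_mul {Θ Θ' : (∀ l, ZMod (n l)) → ℝ}
    (hF : ∀ κ, piDFT n (fun g => (Θ g : ℂ)) κ ≠ 0)
    (h0 : piDFT n (fun g => (Θ' g : ℂ)) 0 = piDFT n (fun g => (Θ g : ℂ)) 0)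
    {l : Fin L} (hn : 2 ≤ n l)
    (h0e : piBispectrum n (fun g => (Θ' g : ℂ)) 0 (Pi.single l 1)
      = piBispectrum n (fun g => (Θ g : ℂ)) 0 (Pi.single l 1))
    (hes : ∀ s : ℕ, 1 ≤ s → s ≤ n l - 2 →
      piBispectrum n (fun g => (Θ' g : ℂ)) (Pi.single l 1) (s • Pi.single l 1)
        = piBispectrum n (fun g => (Θ g : ℂ)) (Pi.single l 1) (s • Pi.single l 1)) :
    ∃ x : ZMod (n l), ∀ c : ZMod (n l),
      piDFT n (fun g => (Θ' g : ℂ)) (Pi.single l c)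
        = stdAddChar (c * x) * piDFT n (fun g => (Θ g : ℂ)) (Pi.single l c) := by
  set F := piDFT n (fun g => (Θ g : ℂ))
  set F' := piDFT n (fun g => (Θ' g : ℂ))
  set ψ := F' (Pi.single l 1) / F (Pi.single l 1)
  have hψF : F' (Pi.single l 1) = ψ * F (Pi.single l 1) := (div_mul_cancel₀ _ (hF _)).symm
  have hψ : ‖ψ‖ = 1 := by
    rw [norm_div, norm_piDFT_eq_of_piBispectrum_zero_left_eq h0 (hF 0) h0e,
      div_self (norm_ne_zero_iff.2 (hF _))]
  have hline : ∀ t, 1 ≤ t → t ≤ n l - 1 →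
      F' (t • Pi.single l 1) = ψ ^ t * F (t • Pi.single l 1) := fun t ht htn =>
    piDFT_nsmul_eq_of_piBispectrum_eq hF hψ hψF hes ht (by omega)
  have hψn : ψ ^ n l = 1 := by
    have hneg : (n l - 1) • (Pi.single l 1 : ∀ j, ZMod (n j)) = -Pi.single l 1 := by
      rw [Pi.nsmul_single_one, ← Pi.single_neg, Nat.cast_pred (by omega), ZMod.natCast_self,
        zero_sub]
    have := pow_eq_one_of_piDFT_ofReal_nsmul_eq (hF _) hψ hψF hneg (hline _ (by omega) le_rfl)
    rwa [Nat.sub_add_cancel (by omega)] at this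
  obtain ⟨x, hx⟩ := ZMod.exists_stdAddChar_eq_of_pow_eq_one hψn
  refine ⟨x, fun c => ?_⟩
  rcases eq_or_ne c 0 with rfl | hc
  · simpa using h0
  · have hval := hline c.val (ZMod.val_pos.2 hc) (Nat.le_pred_of_lt (ZMod.val_lt c))
    rwa [Pi.nsmul_single_one, natCast_zmod_val, ← hx, ← AddChar.map_nsmul_eq_pow, nsmul_eq_mul,
      natCast_zmod_val] at hval

end Bispectrum

theorem selective_bispectrum_inversion_commutative_general (L : ℕ)
    (n : Fin L → ℕ) [∀ l, NeZero (n l)] (hn : ∀ l, 2 ≤ n l)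
    (Θ Θ' : (∀ l, ZMod (n l)) → ℝ)
    (hF : ∀ κ : ∀ l, ZMod (n l), piDFT n (fun g => (Θ g : ℂ)) κ ≠ 0)
    (h00 : piBispectrum n (fun g => (Θ' g : ℂ)) 0 0
         = piBispectrum n (fun g => (Θ g : ℂ)) 0 0)
    (h0e : ∀ l : Fin L,
      piBispectrum n (fun g => (Θ' g : ℂ)) 0 (Pi.single l 1)
        = piBispectrum n (fun g => (Θ g : ℂ)) 0 (Pi.single l 1))
    (hes : ∀ l : Fin L, ∀ s : ℕ, 1 ≤ s → s ≤ n l - 2 →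
      piBispectrum n (fun g => (Θ' g : ℂ)) (Pi.single l 1) (s • Pi.single l 1)
        = piBispectrum n (fun g => (Θ g : ℂ)) (Pi.single l 1) (s • Pi.single l 1))
    (htk : ∀ l : Fin L, ∀ t : ℕ, 1 ≤ t → t ≤ n l - 1 →
      ∀ k : ∀ j, ZMod (n j), (∀ j : Fin L, l ≤ j → k j = 0) → k ≠ 0 →
      piBispectrum n (fun g => (Θ' g : ℂ)) (t • Pi.single l 1) k
        = piBispectrum n (fun g => (Θ g : ℂ)) (t • Pi.single l 1) k) :
    ∃ h : ∀ l, ZMod (n l), ∀ g : ∀ l, ZMod (n l), Θ' g = Θ (g + h) := by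
  set F := piDFT n (fun g => (Θ g : ℂ))
  set F' := piDFT n (fun g => (Θ' g : ℂ))
  have h0 : F' 0 = F 0 := piDFT_ofReal_zero_eq_of_piBispectrum_zero_eq h00
  choose h hsingle using fun l =>
    exists_piDFT_single_eq_stdAddChar_mul hF h0 (hn l) (h0e l) (hes l)
  have hall : ∀ κ, F' κ = piChar n κ h * F κ := by
    refine Pi.induction_on_max (by rw [piChar_zero_left, one_mul, h0]) ?_
    intro l c k hk ihk
    rcases eq_or_ne k 0 with rfl | hk0
    · rw [add_zero, piChar_single_left]
      exact hsingle l c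
    rcases eq_or_ne c 0 with rfl | hc
    · rwa [Pi.single_zero, zero_add]
    have hβ := htk l c.val (ZMod.val_pos.2 hc) (Nat.le_pred_of_lt (ZMod.val_lt c)) k hk hk0
    rw [Pi.nsmul_single_one, natCast_zmod_val] at hβ
    rw [piChar_add_left]
    refine piDFT_add_eq_mul_of_piBispectrum_eq
      (by rw [norm_mul, norm_piChar, norm_piChar, one_mul]) (mul_ne_zero (hF _) (hF _)) ?_ ihk hβ
    rw [piChar_single_left]
    exact hsingle l c
  refine ⟨h, fun g => ?_⟩
  have hshift : F' = piDFT n (fun g => (Θ (g + h) : ℂ)) :=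
    funext fun κ => (hall κ).trans (piDFT_comp_add_right _ h κ).symm
  exact_mod_cast congrFun (piDFT_injective hshift) g

/-- Selective-bispectrum inversion on an arbitrary finite product of cyclic groups
(hence, on any finite commutative group), using only `|G|` bispectral coefficients:
the coefficients `β_{0,0}`, `β_{0,e^l}`, `β_{e^l, s·e^l}` (for `1 ≤ s ≤ n l − 2`) and
`β_{t·e^l, k}` (for `1 ≤ t ≤ n l − 1` and `k ≠ 0` supported on the coordinates
strictly before `l`) determine a real signal with nonvanishing Fourier transform up
to translation. -/
theorem selective_bispectrum_inversion_commutative (L : ℕ) (hL : 1 ≤ L)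
    (n : Fin L → ℕ) [∀ l, NeZero (n l)] (hn : ∀ l, 2 ≤ n l)
    (Θ Θ' : (∀ l, ZMod (n l)) → ℝ)
    (hF : ∀ κ : ∀ l, ZMod (n l), piDFT n (fun g => (Θ g : ℂ)) κ ≠ 0)
    (h00 : piBispectrum n (fun g => (Θ' g : ℂ)) 0 0
         = piBispectrum n (fun g => (Θ g : ℂ)) 0 0)
    (h0e : ∀ l : Fin L,
      piBispectrum n (fun g => (Θ' g : ℂ)) 0 (Pi.single l 1)
        = piBispectrum n (fun g => (Θ g : ℂ)) 0 (Pi.single l 1))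
    (hes : ∀ l : Fin L, ∀ s : ℕ, 1 ≤ s → s ≤ n l - 2 →
      piBispectrum n (fun g => (Θ' g : ℂ)) (Pi.single l 1) (s • Pi.single l 1)
        = piBispectrum n (fun g => (Θ g : ℂ)) (Pi.single l 1) (s • Pi.single l 1))
    (htk : ∀ l : Fin L, ∀ t : ℕ, 1 ≤ t → t ≤ n l - 1 →
      ∀ k : ∀ j, ZMod (n j), (∀ j : Fin L, l ≤ j → k j = 0) → k ≠ 0 →
      piBispectrum n (fun g => (Θ' g : ℂ)) (t • Pi.single l 1) k
        = piBispectrum n (fun g => (Θ g : ℂ)) (t • Pi.single l 1) k) :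
    ∃ h : ∀ l, ZMod (n l), ∀ g : ∀ l, ZMod (n l), Θ' g = Θ (g + h) :=
  selective_bispectrum_inversion_commutative_general L n hn Θ Θ' hF h00 h0e hes htk
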